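/- arXiv:2605.24355 — 3 statements merged into one kernel-verified Lean document; each statement's English description precedes it below -/
import Mathlib

section
/- Let m ≥ 1, let P and B be finite subsets of 𝔽₂^m with |P| = v, let (f_b)_{b∈B} be Boolean functions in m variables, and let k, r, λ be natural numbers. Then the following are equivalent: (A) every block B^{f_b} (b ∈ B) has exactly k points, every point p ∈ P lies in exactly r of the blocks B^{f_b} (b ∈ B), and every pair of distinct points p, q ∈ P lies in exactly λ of the blocks; (B) W_{P,f_b}(0) = v − 2k for every b ∈ B, ∑_{b∈B}(−1)^{f_b(p)} = |B| − 2r for every p ∈ P, and ∑_{b∈B}(−1)^{f_b(p)+f_b(q)} = 4(λ − r) + |B| for every pair of distinct p, q ∈ P (all equalities read in ℤ). -/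
open Finset

/-- dot product on 𝔽₂^m -/
def dotp {m : ℕ} (a x : Fin m → ZMod 2) : ZMod 2 := ∑ i, a i * x i

/-- (−1)^a for a ∈ 𝔽₂, as an integer -/
def sgn (a : ZMod 2) : ℤ := if a = 0 then 1 else -1

/-- Walsh transform of f on a finite subset P of 𝔽₂^m -/
def walsh {m : ℕ} (P : Finset (Fin m → ZMod 2)) (f : (Fin m → ZMod 2) → ZMod 2)
    (u : Fin m → ZMod 2) : ℤ :=
  ∑ x ∈ P, sgn (f x + dotp u x)

/-- Walsh transform of f on all of 𝔽₂^m -/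
def walshF {m : ℕ} (f : (Fin m → ZMod 2) → ZMod 2) (u : Fin m → ZMod 2) : ℤ :=
  walsh Finset.univ f u

lemma sgn_eq (a : ZMod 2) : sgn a = 1 - 2 * (if a = 1 then (1:ℤ) else 0) := by
  revert a; decide

lemma sgn_add_eq (a b : ZMod 2) :
    sgn (a + b) = 1 - 2 * (if a = 1 then (1:ℤ) else 0) - 2 * (if b = 1 then (1:ℤ) else 0)
      + 4 * (if a = 1 ∧ b = 1 then (1:ℤ) else 0) := by
  revert a b; decide

lemma sum_sgn {α : Type*} [DecidableEq α] (S : Finset α) (f : α → ZMod 2) :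
    ∑ x ∈ S, sgn (f x) = (S.card : ℤ) - 2 * ((S.filter (fun x => f x = 1)).card : ℤ) := by
  simp only [sgn_eq, Finset.sum_sub_distrib, Finset.sum_const, ← Finset.mul_sum,
    Finset.sum_boole]
  push_cast
  ring

lemma sum_sgn_add {α : Type*} [DecidableEq α] (S : Finset α) (f g : α → ZMod 2) :
    ∑ x ∈ S, sgn (f x + g x) = (S.card : ℤ)
      - 2 * ((S.filter (fun x => f x = 1)).card : ℤ)
      - 2 * ((S.filter (fun x => g x = 1)).card : ℤ)
      + 4 * ((S.filter (fun x => f x = 1 ∧ g x = 1)).card : ℤ) := by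
  simp only [sgn_add_eq, Finset.sum_add_distrib, Finset.sum_sub_distrib, Finset.sum_const,
    ← Finset.mul_sum, Finset.sum_boole]
  push_cast
  ring

theorem stmt_2 (m : ℕ) (hm : 1 ≤ m) (P B : Finset (Fin m → ZMod 2))
    (F : (Fin m → ZMod 2) → (Fin m → ZMod 2) → ZMod 2)
    (v k r lam : ℕ) (hv : P.card = v) :
    ((∀ b ∈ B, (P.filter (fun p => F b p = 1)).card = k) ∧
     (∀ p ∈ P, (B.filter (fun b => F b p = 1)).card = r) ∧
     (∀ p ∈ P, ∀ q ∈ P, p ≠ q →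
        (B.filter (fun b => F b p = 1 ∧ F b q = 1)).card = lam))
    ↔
    ((∀ b ∈ B, walsh P (F b) 0 = (v : ℤ) - 2 * k) ∧
     (∀ p ∈ P, ∑ b ∈ B, sgn (F b p) = (B.card : ℤ) - 2 * r) ∧
     (∀ p ∈ P, ∀ q ∈ P, p ≠ q →
        ∑ b ∈ B, sgn (F b p + F b q) = 4 * ((lam : ℤ) - (r : ℤ)) + (B.card : ℤ))) := by
  have hwalsh : ∀ b, walsh P (F b) 0 = ∑ x ∈ P, sgn (F b x) := by
    intro b
    unfold walsh
    apply Finset.sum_congr rfl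
    intro x _
    congr 1
    simp [dotp]
  constructor
  · rintro ⟨h1, h2, h3⟩
    refine ⟨?_, ?_, ?_⟩
    · intro b hb
      rw [hwalsh b, sum_sgn, h1 b hb, hv]
    · intro p hp
      rw [sum_sgn, h2 p hp]
    · intro p hp q hq hpq
      rw [sum_sgn_add, h2 p hp, h2 q hq, h3 p hp q hq hpq]
      ring
  · rintro ⟨h1, h2, h3⟩
    have h2' : ∀ p ∈ P, (B.filter (fun b => F b p = 1)).card = r := by
      intro p hp
      have := h2 p hp
      rw [sum_sgn] at this
      omega
    refine ⟨?_, h2', ?_⟩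
    · intro b hb
      have := h1 b hb
      rw [hwalsh b, sum_sgn, hv] at this
      omega
    · intro p hp q hq hpq
      have := h3 p hp q hq hpq
      rw [sum_sgn_add, h2' p hp, h2' q hq] at this
      omega
end

section
/- Let C be an 𝔽₂-linear subspace of 𝔽₂^m such that C ∩ C^⊥ = {0}, where C^⊥ = {x ∈ 𝔽₂^m : x·y = 0 for all y ∈ C} (i.e., C is an LCD code). For each b ∈ C∖{0} let B_b = {p ∈ C∖{0} : b·p = 1}. Then 2·|B_b| = |C| for every b ∈ C∖{0}, and for every pair of distinct points p, q ∈ C∖{0}, 4·|{b ∈ C∖{0} : b·p = 1 and b·q = 1}| = |C|. Hence (C∖{0}, {B_b : b ∈ C∖{0}}) is a symmetric 2-(|C|−1, |C|/2, |C|/4) design (the number of blocks equals the number of points). -/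
open Finset

lemma zmod2_cases (a : ZMod 2) : a = 0 ∨ a = 1 := by revert a; decide

lemma zmod2_ne_one (a : ZMod 2) : ¬ a = 1 ↔ a = 0 := by revert a; decide

lemma addself {m : ℕ} (x : Fin m → ZMod 2) : x + x = 0 := by
  funext i
  have := zmod2_cases (x i)
  rcases this with h | h <;> simp [h] <;> decide

lemma dotp_comm {m : ℕ} (a b : Fin m → ZMod 2) : dotp a b = dotp b a := by
  simp [dotp, mul_comm]

lemma dotp_add_left {m : ℕ} (a b x : Fin m → ZMod 2) :
    dotp (a + b) x = dotp a x + dotp b x := by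
  simp [dotp, add_mul, Finset.sum_add_distrib]

lemma dotp_add_right {m : ℕ} (a x y : Fin m → ZMod 2) :
    dotp a (x + y) = dotp a x + dotp a y := by
  simp [dotp, mul_add, Finset.sum_add_distrib]

lemma dotp_zero_right {m : ℕ} (x : Fin m → ZMod 2) : dotp x 0 = 0 := by
  simp [dotp]

lemma card_translate {m : ℕ} (C : Finset (Fin m → ZMod 2))
    (hadd : ∀ x ∈ C, ∀ y ∈ C, x + y ∈ C) (t : Fin m → ZMod 2) (ht : t ∈ C)
    (P Q : (Fin m → ZMod 2) → Prop) [DecidablePred P] [DecidablePred Q]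
    (hPQ : ∀ x, P x ↔ Q (x + t)) :
    (C.filter P).card = (C.filter Q).card := by
  have key : ∀ x : Fin m → ZMod 2, x + t + t = x := by
    intro x; rw [add_assoc, addself, add_zero]
  apply Finset.card_bij' (fun x _ => x + t) (fun x _ => x + t)
  · intro a ha
    simp only [mem_filter] at ha ⊢
    exact ⟨hadd a ha.1 t ht, (hPQ a).1 ha.2⟩
  · intro a ha
    simp only [mem_filter] at ha ⊢
    refine ⟨hadd a ha.1 t ht, ?_⟩
    have := (hPQ (a + t)).2
    rw [key] at this
    exact this ha.2
  · intro a _; exact key a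
  · intro a _; exact key a

lemma half_count {m : ℕ} (C : Finset (Fin m → ZMod 2))
    (hadd : ∀ x ∈ C, ∀ y ∈ C, x + y ∈ C)
    (F : (Fin m → ZMod 2) → ZMod 2)
    (hF : ∀ x y, F (x + y) = F x + F y)
    (hu : ∃ u ∈ C, F u = 1) :
    2 * (C.filter (fun x => F x = 1)).card = C.card := by
  obtain ⟨u, huC, hu1⟩ := hu
  have e : (C.filter (fun x => F x = 0)).card = (C.filter (fun x => F x = 1)).card := by
    apply card_translate C hadd u huC
    intro x
    rw [hF, hu1]
    rcases zmod2_cases (F x) with h | h <;> simp [h] <;> decide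
  have hsplit := Finset.card_filter_add_card_filter_not
    (s := C) (p := fun x => F x = 1)
  have hcongr : C.filter (fun x => ¬ F x = 1) = C.filter (fun x => F x = 0) := by
    apply Finset.filter_congr
    intro x _
    exact zmod2_ne_one (F x)
  rw [hcongr, e] at hsplit
  omega

lemma exists10 {m : ℕ} (C : Finset (Fin m → ZMod 2))
    (F G : (Fin m → ZMod 2) → ZMod 2)
    (hF : ∀ x y, F (x + y) = F x + F y)
    (hG : ∀ x y, G (x + y) = G x + G y)
    (hu : ∃ u ∈ C, F u = 1)
    (hw : ∃ w ∈ C, F w + G w = 1)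
    (hadd : ∀ x ∈ C, ∀ y ∈ C, x + y ∈ C) :
    ∃ a ∈ C, F a = 1 ∧ G a = 0 := by
  obtain ⟨u, huC, hu1⟩ := hu
  obtain ⟨w, hwC, hw1⟩ := hw
  rcases zmod2_cases (G u) with hgu | hgu
  · exact ⟨u, huC, hu1, hgu⟩
  · rcases zmod2_cases (F w) with hfw | hfw
    · rw [hfw, zero_add] at hw1
      refine ⟨u + w, hadd u huC w hwC, ?_, ?_⟩
      · rw [hF, hu1, hfw]; decide
      · rw [hG, hgu, hw1]; decide
    · rw [hfw] at hw1
      have hgw : G w = 0 := by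
        rcases zmod2_cases (G w) with h | h
        · exact h
        · rw [h] at hw1; exact absurd hw1 (by decide)
      exact ⟨w, hwC, hfw, hgw⟩

lemma quarter_count {m : ℕ} (C : Finset (Fin m → ZMod 2))
    (hadd : ∀ x ∈ C, ∀ y ∈ C, x + y ∈ C)
    (F G : (Fin m → ZMod 2) → ZMod 2)
    (hF : ∀ x y, F (x + y) = F x + F y)
    (hG : ∀ x y, G (x + y) = G x + G y)
    (ha : ∃ a ∈ C, F a = 1 ∧ G a = 0)
    (hb : ∃ b ∈ C, F b = 0 ∧ G b = 1) :
    4 * (C.filter (fun x => F x = 1 ∧ G x = 1)).card = C.card := by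
  obtain ⟨a, haC, ha1, ha0⟩ := ha
  obtain ⟨b, hbC, hb0, hb1⟩ := hb
  -- translation by a : (0,δ) ↔ (1,δ)
  have ta : ∀ δ : ZMod 2,
      (C.filter (fun x => F x = 0 ∧ G x = δ)).card
        = (C.filter (fun x => F x = 1 ∧ G x = δ)).card := by
    intro δ
    apply card_translate C hadd a haC
    intro x
    rw [hF, hG, ha1, ha0, add_zero]
    rcases zmod2_cases (F x) with h | h <;> rcases zmod2_cases (G x) with h' | h' <;>
      simp [h, h'] <;> decide
  have tb : ∀ ε : ZMod 2,
      (C.filter (fun x => F x = ε ∧ G x = 0)).card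
        = (C.filter (fun x => F x = ε ∧ G x = 1)).card := by
    intro ε
    apply card_translate C hadd b hbC
    intro x
    rw [hF, hG, hb0, hb1, add_zero]
    rcases zmod2_cases (F x) with h | h <;> rcases zmod2_cases (G x) with h' | h' <;>
      simp [h, h'] <;> decide
  -- split C by F
  have hsplitF := Finset.card_filter_add_card_filter_not
    (s := C) (p := fun x => F x = 1)
  have hcongrF : C.filter (fun x => ¬ F x = 1) = C.filter (fun x => F x = 0) := by
    apply Finset.filter_congr; intro x _; exact zmod2_ne_one (F x)
  rw [hcongrF] at hsplitF
  -- split each by G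
  have hsplitG : ∀ ε : ZMod 2,
      (C.filter (fun x => F x = ε ∧ G x = 1)).card
        + (C.filter (fun x => F x = ε ∧ G x = 0)).card
        = (C.filter (fun x => F x = ε)).card := by
    intro ε
    have h := Finset.card_filter_add_card_filter_not
      (s := C.filter (fun x => F x = ε)) (p := fun x => G x = 1)
    rw [Finset.filter_filter, Finset.filter_filter] at h
    have hc : (C.filter fun x => F x = ε ∧ ¬ G x = 1)
        = C.filter (fun x => F x = ε ∧ G x = 0) := by
      apply Finset.filter_congr; intro x _
      constructor
      · rintro ⟨h1, h2⟩; exact ⟨h1, (zmod2_ne_one _).1 h2⟩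
      · rintro ⟨h1, h2⟩; exact ⟨h1, (zmod2_ne_one _).2 h2⟩
    rw [hc] at h
    exact h
  have e1 := hsplitG 1
  have e0 := hsplitG 0
  have t1 := ta 1
  have t0 := tb 1
  have t2 := ta 0
  omega

/-- a code here is a finite subset of 𝔽₂^m containing 0 and closed under
addition (equivalently an 𝔽₂-linear subspace); LCD means C ∩ C^⊥ = {0}. -/
theorem stmt_3 (m : ℕ) (C : Finset (Fin m → ZMod 2))
    (h0 : (0 : Fin m → ZMod 2) ∈ C)
    (hadd : ∀ x ∈ C, ∀ y ∈ C, x + y ∈ C)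
    (hlcd : ∀ x ∈ C, (∀ y ∈ C, dotp x y = 0) → x = 0) :
    (∀ b ∈ C.erase 0,
      2 * ((C.erase 0).filter (fun p => dotp b p = 1)).card = C.card) ∧
    (∀ p ∈ C.erase 0, ∀ q ∈ C.erase 0, p ≠ q →
      4 * ((C.erase 0).filter (fun b => dotp b p = 1 ∧ dotp b q = 1)).card = C.card) ∧
    (C.erase 0).card = C.card - 1 := by
  have hex : ∀ x ∈ C, x ≠ 0 → ∃ y ∈ C, dotp x y = 1 := by
    intro x hx hx0
    by_contra h
    push_neg at h
    exact hx0 (hlcd x hx (fun y hy => (zmod2_ne_one _).1 (h y hy)))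
  have herase : ∀ (P : (Fin m → ZMod 2) → Prop) [DecidablePred P], ¬ P 0 →
      (C.erase 0).filter P = C.filter P := by
    intro P _ hP0
    ext x
    simp only [mem_filter, mem_erase]
    constructor
    · rintro ⟨⟨_, hx⟩, hPx⟩; exact ⟨hx, hPx⟩
    · rintro ⟨hx, hPx⟩
      exact ⟨⟨fun h => hP0 (h ▸ hPx), hx⟩, hPx⟩
  refine ⟨?_, ?_, ?_⟩
  · intro b hb
    rw [mem_erase] at hb
    rw [herase _ (by rw [dotp_zero_right]; decide)]
    exact half_count C hadd (fun p => dotp b p) (fun x y => dotp_add_right b x y)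
      (hex b hb.2 hb.1)
  · intro p hp q hq hpq
    rw [mem_erase] at hp hq
    have hne : p + q ≠ 0 := by
      intro h
      apply hpq
      have := congrArg (fun z => p + z) h
      simp only [add_zero] at this
      rw [← add_assoc, addself, zero_add] at this
      exact this.symm
    have hPQmem : p + q ∈ C := hadd p hp.2 q hq.2
    have hup : ∃ u ∈ C, dotp u p = 1 := by
      obtain ⟨u, huC, hu1⟩ := hex p hp.2 hp.1
      exact ⟨u, huC, by rw [dotp_comm]; exact hu1⟩
    have huq : ∃ u ∈ C, dotp u q = 1 := by
      obtain ⟨u, huC, hu1⟩ := hex q hq.2 hq.1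
      exact ⟨u, huC, by rw [dotp_comm]; exact hu1⟩
    have hupq : ∃ w ∈ C, dotp w p + dotp w q = 1 := by
      obtain ⟨w, hwC, hw1⟩ := hex (p + q) hPQmem hne
      refine ⟨w, hwC, ?_⟩
      rw [← dotp_add_right, ← dotp_comm]
      exact hw1
    have hFadd : ∀ x y, dotp (x + y) p = dotp x p + dotp y p :=
      fun x y => dotp_add_left x y p
    have hGadd : ∀ x y, dotp (x + y) q = dotp x q + dotp y q :=
      fun x y => dotp_add_left x y q
    have ha := exists10 C (fun b => dotp b p) (fun b => dotp b q) hFadd hGadd hup hupq hadd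
    have hb' := exists10 C (fun b => dotp b q) (fun b => dotp b p) hGadd hFadd huq
      (by obtain ⟨w, hwC, hw1⟩ := hupq; exact ⟨w, hwC, by rw [add_comm]; exact hw1⟩) hadd
    have hb'' : ∃ b ∈ C, dotp b p = 0 ∧ dotp b q = 1 := by
      obtain ⟨b, hbC, h1, h2⟩ := hb'
      exact ⟨b, hbC, h2, h1⟩
    rw [herase _ (by simp [dotp])]
    exact quarter_count C hadd (fun b => dotp b p) (fun b => dotp b q) hFadd hGadd ha hb''
  · rw [Finset.card_erase_of_mem h0]
end

section
/- Let 0 ≤ r < m with m + r even and let f and g be r-plateaued Boolean functions in m variables, each with no nonzero linear structure. Write W_f(x) = (−1)^{g̃_f(x)}·2^{(m+r)/2} for x ∈ S_f and W_g(x) = (−1)^{g̃_g(x)}·2^{(m+r)/2} for x ∈ S_g. If f and g are extended-affine equivalent, i.e., there exist an affine permutation σ of 𝔽₂^m, y ∈ 𝔽₂^m and s ∈ 𝔽₂ with f(x) = g(σ(x)) + y·x + s for all x ∈ 𝔽₂^m, then the addition designs AD_f and AD_g are isomorphic: there exist a bijection Π of 𝔽₂^m and a bijection T : S_f → S_g such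 that f(b) + g̃_f(p) + b·p = g(Π(b)) + g̃_g(T(p)) + Π(b)·T(p) for all b ∈ 𝔽₂^m and all p ∈ S_f. -/
open Finset Matrix

lemma dotp_eq {m : ℕ} (a x : Fin m → ZMod 2) : dotp a x = dotProduct a x := rfl

open Matrix in
lemma sgn_add : ∀ a b : ZMod 2, sgn (a + b) = sgn a * sgn b := by decide

lemma sgn_inj : ∀ a b : ZMod 2, sgn a = sgn b → a = b := by decide

lemma sgn_ne_zero : ∀ a : ZMod 2, sgn a ≠ 0 := by decide

theorem stmt_12 (m r : ℕ) (hrm : r < m) (hpar : Even (m + r))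
    (f g : (Fin m → ZMod 2) → ZMod 2)
    (hplatf : ∀ a, walshF f a = 0 ∨ walshF f a = 2 ^ ((m + r) / 2) ∨
      walshF f a = -2 ^ ((m + r) / 2))
    (hplatg : ∀ a, walshF g a = 0 ∨ walshF g a = 2 ^ ((m + r) / 2) ∨
      walshF g a = -2 ^ ((m + r) / 2))
    (hlsf : ∀ a : Fin m → ZMod 2, a ≠ 0 → ¬ ∃ c : ZMod 2, ∀ x, f x + f (x + a) = c)
    (hlsg : ∀ a : Fin m → ZMod 2, a ≠ 0 → ¬ ∃ c : ZMod 2, ∀ x, g x + g (x + a) = c)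
    (gf gg : (Fin m → ZMod 2) → ZMod 2)
    (hgf : ∀ x, walshF f x ≠ 0 → walshF f x = sgn (gf x) * 2 ^ ((m + r) / 2))
    (hgg : ∀ x, walshF g x ≠ 0 → walshF g x = sgn (gg x) * 2 ^ ((m + r) / 2))
    -- extended-affine equivalence of f and g
    (heq : ∃ (L : (Fin m → ZMod 2) ≃ₗ[ZMod 2] (Fin m → ZMod 2))
      (c y : Fin m → ZMod 2) (s : ZMod 2),
        ∀ x, f x = g (L x + c) + dotp y x + s) :
    -- the addition designs AD_f and AD_g are isomorphic
    ∃ (Φ : Equiv.Perm (Fin m → ZMod 2)) (T : (Fin m → ZMod 2) → (Fin m → ZMod 2)),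
      Set.BijOn T {x | walshF f x ≠ 0} {x | walshF g x ≠ 0} ∧
      ∀ b : Fin m → ZMod 2, ∀ p : Fin m → ZMod 2, walshF f p ≠ 0 →
        f b + gf p + dotp b p = g (Φ b) + gg (T p) + dotp (Φ b) (T p) := by
  classical
  obtain ⟨L, c, y, s, hfg⟩ := heq
  have h2 : ∀ a : ZMod 2, a + a = 0 := by decide
  have h2v : ∀ v : Fin m → ZMod 2, v + v = 0 := fun v => funext fun i => h2 (v i)
  set M := LinearMap.toMatrix' L.toLinearMap with hM
  set N := LinearMap.toMatrix' L.symm.toLinearMap with hN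
  have hNM : N * M = 1 := by
    rw [hN, hM, ← LinearMap.toMatrix'_comp]; simp
  have hMN : M * N = 1 := by
    rw [hN, hM, ← LinearMap.toMatrix'_comp]; simp
  have hMv : ∀ x, M.mulVec x = L x := fun x => by
    rw [hM, ← Matrix.toLin'_apply, Matrix.toLin'_toMatrix']; rfl
  have hNv : ∀ x, N.mulVec x = L.symm x := fun x => by
    rw [hN, ← Matrix.toLin'_apply, Matrix.toLin'_toMatrix']; rfl
  set T : (Fin m → ZMod 2) → (Fin m → ZMod 2) := fun p => Nᵀ.mulVec (p + y) with hT
  set S : (Fin m → ZMod 2) → (Fin m → ZMod 2) := fun q => Mᵀ.mulVec q + y with hS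
  have hST : ∀ p, S (T p) = p := fun p => by
    simp only [hS, hT, Matrix.mulVec_mulVec, ← Matrix.transpose_mul, hNM,
      Matrix.transpose_one, Matrix.one_mulVec]
    rw [add_assoc, h2v, add_zero]
  have hTS : ∀ q, T (S q) = q := fun q => by
    simp only [hS, hT]
    rw [add_assoc, h2v, add_zero, Matrix.mulVec_mulVec, ← Matrix.transpose_mul, hMN,
      Matrix.transpose_one, Matrix.one_mulVec]
  -- the key Walsh-transform identity
  have hdz : ∀ p z, dotp (p + y) (L.symm z) = dotp (T p) z := fun p z => by
    simp only [dotp_eq, hT]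
    rw [← hNv, Matrix.dotProduct_mulVec, ← Matrix.mulVec_transpose]
  have key : ∀ p, walshF f p = sgn (s + dotp (T p) c) * walshF g (T p) := by
    intro p
    have e1 : ∀ w, dotp p (L.symm w) + dotp y (L.symm w) = dotp (T p) w := fun w => by
      rw [← hdz p w]; simp only [dotp_eq, add_dotProduct]
    let e : (Fin m → ZMod 2) ≃ (Fin m → ZMod 2) :=
      { toFun := fun z => L.symm (z + c)
        invFun := fun x => L x + c
        left_inv := fun z => by
          show L (L.symm (z + c)) + c = z
          rw [LinearEquiv.apply_symm_apply, add_assoc, h2v, add_zero]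
        right_inv := fun x => by
          show L.symm (L x + c + c) = x
          rw [add_assoc, h2v, add_zero, LinearEquiv.symm_apply_apply] }
    have harg : ∀ z, f (L.symm (z + c)) + dotp p (L.symm (z + c)) =
        (s + dotp (T p) c) + (g z + dotp (T p) z) := by
      intro z
      have hL : L (L.symm (z + c)) + c = z := by
        rw [LinearEquiv.apply_symm_apply, add_assoc, h2v, add_zero]
      have hw : L.symm (z + c) = L.symm z + L.symm c := map_add _ _ _
      rw [hfg (L.symm (z + c)), hL, hw]
      have d1 : dotp y (L.symm z + L.symm c) = dotp y (L.symm z) + dotp y (L.symm c) := by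
        simp only [dotp_eq, dotProduct_add]
      have d2 : dotp p (L.symm z + L.symm c) = dotp p (L.symm z) + dotp p (L.symm c) := by
        simp only [dotp_eq, dotProduct_add]
      rw [d1, d2]
      linear_combination e1 z + e1 c
    unfold walshF walsh
    rw [Finset.mul_sum, ← Equiv.sum_comp e (fun x => sgn (f x + dotp p x))]
    refine Finset.sum_congr rfl fun z _ => ?_
    show sgn (f (L.symm (z + c)) + dotp p (L.symm (z + c))) = _
    rw [harg z, sgn_add]
  have hTne : ∀ p, walshF f p ≠ 0 → walshF g (T p) ≠ 0 := by
    intro p hp hz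
    rw [key p, hz, mul_zero] at hp
    exact hp rfl
  have hSne : ∀ q, walshF g q ≠ 0 → walshF f (S q) ≠ 0 := by
    intro q hq
    rw [key (S q), hTS q]
    exact mul_ne_zero (sgn_ne_zero _) hq
  have hbij : Set.BijOn T {x | walshF f x ≠ 0} {x | walshF g x ≠ 0} := by
    refine ⟨fun p hp => hTne p hp, fun p _ q _ h => ?_, fun q hq => ?_⟩
    · rw [← hST p, h, hST]
    · exact ⟨S q, hSne q hq, hTS q⟩
  have hgfgg : ∀ p, walshF f p ≠ 0 → gf p = s + dotp (T p) c + gg (T p) := by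
    intro p hp
    have h3 := key p
    rw [hgf p hp, hgg (T p) (hTne p hp), ← mul_assoc] at h3
    have hk : (2 : ℤ) ^ ((m + r) / 2) ≠ 0 := by positivity
    have h4 : sgn (gf p) = sgn (s + dotp (T p) c) * sgn (gg (T p)) :=
      mul_right_cancel₀ hk h3
    rw [← sgn_add] at h4
    exact sgn_inj _ _ h4
  refine ⟨L.toEquiv.trans (Equiv.addRight c), T, hbij, fun b p hp => ?_⟩
  have hΦ : (L.toEquiv.trans (Equiv.addRight c)) b = L b + c := rfl
  have hMT : Mᵀ.mulVec (T p) = p + y := by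
    simp only [hT]
    rw [Matrix.mulVec_mulVec, ← Matrix.transpose_mul, hNM, Matrix.transpose_one,
      Matrix.one_mulVec]
  have hLbT : dotp (L b) (T p) = dotp b p + dotp y b := by
    simp only [dotp_eq]
    rw [dotProduct_comm, ← hMv b, Matrix.dotProduct_mulVec, ← Matrix.mulVec_transpose,
      hMT, add_dotProduct, dotProduct_comm p b]
  have hbp : dotp (L b + c) (T p) = dotp b p + dotp y b + dotp (T p) c := by
    have : dotp (L b + c) (T p) = dotp (L b) (T p) + dotp c (T p) := by
      simp only [dotp_eq, add_dotProduct]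
    rw [this, hLbT]
    have : dotp c (T p) = dotp (T p) c := by
      simp only [dotp_eq]; rw [dotProduct_comm]
    rw [this]
  rw [hΦ, hfg b, hgfgg p hp]
  have hss : s + s = 0 := h2 s
  have hyy : dotp y b + dotp y b = 0 := h2 (dotp y b)
  linear_combination hss - hbp
end
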